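/- For an algebraic curvature operator R on ℝ^n with traceless Ricci tensor Ric₀ and Weyl part W, |⟨Ric₀ ∧ Ric₀, W⟩| ≤ √((n-2)/(2(n-1)))·‖W‖·|Ric₀|². -/

import Mathlib

open scoped BigOperators

namespace PaperStmt

noncomputable section Work

variable {N : Type*} [Fintype N] [DecidableEq N]

/-- Kronecker delta. -/
def kd (i j : N) : ℝ := if i = j then 1 else 0

/-- Algebraic curvature operator: antisymmetry in first and last pairs,
pair-interchange symmetry, and the first Bianchi identity. -/
def IsCurvOp (R : N → N → N → N → ℝ) : Prop :=
  (∀ i j k l, R j i k l = - R i j k l) ∧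
  (∀ i j k l, R i j l k = - R i j k l) ∧
  (∀ i j k l, R k l i j = R i j k l) ∧
  (∀ i j k l, R i j k l + R j k i l + R k i j l = 0)

/-- Ricci tensor. -/
def ric (R : N → N → N → N → ℝ) (i j : N) : ℝ := ∑ k, R i k j k

/-- Scalar curvature. -/
def scal (R : N → N → N → N → ℝ) : ℝ := ∑ i, ric R i i

/-- Inner product of symmetric 2-tensors. -/
def inner2 (A B : N → N → ℝ) : ℝ := ∑ i, ∑ j, A i j * B i j

def norm2sq (A : N → N → ℝ) : ℝ := inner2 A A

/-- Inner product of curvature operators: (1/4) Σ X_{ijkl} Y_{ijkl}. -/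
def inner4 (X Y : N → N → N → N → ℝ) : ℝ :=
  (1/4) * ∑ i, ∑ j, ∑ k, ∑ l, X i j k l * Y i j k l

def norm4sq (X : N → N → N → N → ℝ) : ℝ := inner4 X X

/-- Wedge (Kulkarni–Nomizu type) product of symmetric endomorphisms. -/
def wedge (A B : N → N → ℝ) (i j k l : N) : ℝ :=
  (1/2) * (A i k * B j l + B i k * A j l - A i l * B j k - A j k * B i l)

/-- Normalized scalar curvature λ̄ = scal/n. -/
def lam (n : ℕ) (R : N → N → N → N → ℝ) : ℝ := scal R / n

/-- Traceless Ricci tensor. -/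
def ric0 (n : ℕ) (R : N → N → N → N → ℝ) (i j : N) : ℝ :=
  ric R i j - lam n R * kd i j

/-- Scalar-curvature part R_I = (λ̄/(n-1)) id∧id. -/
def RI (n : ℕ) (R : N → N → N → N → ℝ) (i j k l : N) : ℝ :=
  (lam n R / ((n : ℝ) - 1)) * wedge kd kd i j k l

/-- Traceless-Ricci part R_{Ric₀} = (2/(n-2)) Ric₀ ∧ id. -/
def RRic0 (n : ℕ) (R : N → N → N → N → ℝ) (i j k l : N) : ℝ :=
  (2 / ((n : ℝ) - 2)) * wedge (ric0 n R) kd i j k l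

/-- Weyl part W = R - R_I - R_{Ric₀}. -/
def weyl (n : ℕ) (R : N → N → N → N → ℝ) (i j k l : N) : ℝ :=
  R i j k l - RI n R i j k l - RRic0 n R i j k l

/-- Square of a curvature operator. -/
def csq (R : N → N → N → N → ℝ) (i j k l : N) : ℝ :=
  (1/2) * ∑ p, ∑ q, R i j p q * R k l p q

/-- Hamilton's sharp operation R♯. -/
def sharp (R : N → N → N → N → ℝ) (i j k l : N) : ℝ :=
  ∑ p, ∑ q, (R i p k q * R j p l q - R i p l q * R j p k q)

/-- Hamilton's quadratic term Q(R) = R² + R♯. -/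
def Q (R : N → N → N → N → ℝ) (i j k l : N) : ℝ := csq R i j k l + sharp R i j k l

/-- Square of a symmetric 2-tensor. -/
def matsq (A : N → N → ℝ) (i j : N) : ℝ := ∑ k, A i k * A k j

/-- Traceless part of a symmetric 2-tensor. -/
def tless (n : ℕ) (A : N → N → ℝ) (i j : N) : ℝ :=
  A i j - ((∑ k, A k k) / n) * kd i j

end Work

/-!
Write `A = Ric₀`. The Weyl tensor is Ricci-flat, hence orthogonal to every `B ∧ id`, so
`⟨A ∧ A, W⟩ = ⟨T, W⟩` where `T` is the Weyl part of `A ∧ A`. The orthogonal decomposition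
`|X|² = |W(X)|² + |Ric₀(X)|² / (n-2) + scal(X)² / (2n(n-1))`, applied to `X = A ∧ A`
(for which `Ric X = -A²`, `scal X = -|A|²` and `|X|² = (|A|⁴ - |A²|²) / 2`), gives
`|T|² = (n-2)/(2(n-1)) |A|⁴ - n/(2(n-2)) |Ric₀(X)|²`, and Cauchy–Schwarz concludes.
-/

section

variable {N : Type*}

def IsPairSkew (X : N → N → N → N → ℝ) : Prop :=
  (∀ i j k l, X j i k l = - X i j k l) ∧ (∀ i j k l, X i j l k = - X i j k l)

lemma IsCurvOp.isPairSkew {R : N → N → N → N → ℝ} (hR : IsCurvOp R) : IsPairSkew R :=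
  ⟨hR.1, hR.2.1⟩

lemma isPairSkew_wedge (A B : N → N → ℝ) : IsPairSkew (wedge A B) :=
  ⟨fun i j k l => by simp only [wedge]; ring, fun i j k l => by simp only [wedge]; ring⟩

variable [Fintype N]

lemma sum4_congr {f g : N → N → N → N → ℝ} (h : ∀ i j k l, f i j k l = g i j k l) :
    ∑ i, ∑ j, ∑ k, ∑ l, f i j k l = ∑ i, ∑ j, ∑ k, ∑ l, g i j k l := by
  simp only [h]

lemma ric_sub (X Y : N → N → N → N → ℝ) : ric (X - Y) = ric X - ric Y := by
  ext i j; simp [ric]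

lemma ric_smul (c : ℝ) (X : N → N → N → N → ℝ) : ric (c • X) = c • ric X := by
  ext i j; simp [ric, Finset.mul_sum]

lemma inner4_comm (X Y : N → N → N → N → ℝ) : inner4 X Y = inner4 Y X := by
  simp only [inner4, mul_comm]

lemma inner4_sub_left (X Y Z : N → N → N → N → ℝ) :
    inner4 (X - Y) Z = inner4 X Z - inner4 Y Z := by
  simp only [inner4, Pi.sub_apply, sub_mul, Finset.sum_sub_distrib]; ring

lemma inner4_smul_left (c : ℝ) (X Y : N → N → N → N → ℝ) :
    inner4 (c • X) Y = c * inner4 X Y := by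
  simp only [inner4, Pi.smul_apply, smul_eq_mul, mul_assoc, ← Finset.mul_sum]; ring

lemma ric_wedge_self (A : N → N → ℝ) (i j : N) :
    ric (wedge A A) i j = (∑ k, A k k) * A i j - matsq A i j := by
  simp only [ric, wedge, matsq, Finset.sum_mul]
  rw [← Finset.sum_sub_distrib]
  exact Finset.sum_congr rfl fun k _ => by ring

lemma norm2sq_nonneg (A : N → N → ℝ) : 0 ≤ norm2sq A :=
  Finset.sum_nonneg fun _ _ => Finset.sum_nonneg fun _ _ => mul_self_nonneg _

lemma norm2sq_neg (A : N → N → ℝ) : norm2sq (-A) = norm2sq A := by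
  simp only [norm2sq, inner2, Pi.neg_apply, neg_mul_neg]

lemma norm4sq_nonneg (X : N → N → N → N → ℝ) : 0 ≤ norm4sq X :=
  mul_nonneg (by norm_num) <| Finset.sum_nonneg fun _ _ => Finset.sum_nonneg fun _ _ =>
    Finset.sum_nonneg fun _ _ => Finset.sum_nonneg fun _ _ => mul_self_nonneg _

lemma inner4_sq_le (X Y : N → N → N → N → ℝ) : inner4 X Y ^ 2 ≤ norm4sq X * norm4sq Y := by
  have flat : ∀ f : N → N → N → N → ℝ, ∑ i, ∑ j, ∑ k, ∑ l, f i j k l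
      = ∑ p : N × N × N × N, f p.1 p.2.1 p.2.2.1 p.2.2.2 := by
    intro f; simp only [Fintype.sum_prod_type]
  have cs := Finset.sum_mul_sq_le_sq_mul_sq Finset.univ
    (fun p : N × N × N × N => X p.1 p.2.1 p.2.2.1 p.2.2.2)
    (fun p : N × N × N × N => Y p.1 p.2.1 p.2.2.1 p.2.2.2)
  simp only [norm4sq, inner4, flat, ← sq] at cs ⊢
  nlinarith [cs]

lemma abs_inner4_le (X Y : N → N → N → N → ℝ) :
    |inner4 X Y| ≤ √(norm4sq X) * √(norm4sq Y) := by
  rw [← Real.sqrt_mul (norm4sq_nonneg X)]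
  exact Real.abs_le_sqrt (inner4_sq_le X Y)

lemma norm4sq_wedge_self {A : N → N → ℝ} (hA : ∀ i j, A j i = A i j) :
    norm4sq (wedge A A) = (norm2sq A ^ 2 - norm2sq (matsq A)) / 2 := by
  have expand : ∀ i j k l, wedge A A i j k l * wedge A A i j k l
      = A i k ^ 2 * A j l ^ 2 + A i l ^ 2 * A j k ^ 2 - 2 * ((A i k * A i l) * (A j k * A j l)) := by
    intro i j k l; simp only [wedge]; ring
  have h1 : ∑ i, ∑ j, ∑ k, ∑ l, A i k ^ 2 * A j l ^ 2 = norm2sq A ^ 2 := by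
    rw [sq, norm2sq, inner2]
    simp only [Finset.sum_mul_sum, sq]
  have h2 : ∑ i, ∑ j, ∑ k, ∑ l, A i l ^ 2 * A j k ^ 2 = norm2sq A ^ 2 := by
    rw [← h1]
    exact Finset.sum_congr rfl fun _ _ => Finset.sum_congr rfl fun _ _ => Finset.sum_comm
  have h3 : ∑ i, ∑ j, ∑ k, ∑ l, (A i k * A i l) * (A j k * A j l) = norm2sq (matsq A) := by
    have hM : ∀ i j, matsq A i j = ∑ k, A i k * A j k := fun i j =>
      Finset.sum_congr rfl fun k _ => by rw [hA k j]
    simp only [norm2sq, inner2, hM, Finset.sum_mul_sum]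
    exact sum4_congr fun _ _ _ _ => by ring
  rw [norm4sq, inner4, sum4_congr expand]
  simp only [Finset.sum_add_distrib, Finset.sum_sub_distrib]
  rw [h1, h2]
  simp only [← Finset.mul_sum]
  rw [h3]
  ring

variable [DecidableEq N]

lemma weyl_eq (n : ℕ) (X : N → N → N → N → ℝ) :
    weyl n X = X - (lam n X / ((n : ℝ) - 1)) • wedge kd kd
      - (2 / ((n : ℝ) - 2)) • wedge (ric0 n X) kd := rfl

lemma IsPairSkew.weyl {X : N → N → N → N → ℝ} (hX : IsPairSkew X) (n : ℕ) :
    IsPairSkew (weyl n X) :=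
  ⟨fun i j k l => by simp only [PaperStmt.weyl, RI, RRic0, wedge]; rw [hX.1]; ring,
   fun i j k l => by simp only [PaperStmt.weyl, RI, RRic0, wedge]; rw [hX.2]; ring⟩

lemma sum_mul_kd_mul (B : N → N → ℝ) (X : N → N → N → N → ℝ) :
    ∑ i, ∑ j, ∑ k, ∑ l, B i k * kd j l * X i j k l = inner2 B (ric X) := by
  simp only [kd, mul_ite, mul_one, mul_zero, ite_mul, zero_mul, Finset.sum_ite_eq,
    Finset.mem_univ, if_true, inner2, ric, Finset.mul_sum]
  exact Finset.sum_congr rfl fun i _ => Finset.sum_comm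

lemma IsPairSkew.inner4_wedge_kd {X : N → N → N → N → ℝ} (hX : IsPairSkew X)
    (B : N → N → ℝ) : inner4 (wedge B kd) X = inner2 B (ric X) / 2 := by
  -- Swapping `i ↔ j` and/or `k ↔ l` turns each of the four terms of `B ∧ id` into `±` the first.
  have swap_ij : ∀ f : N → N → N → N → ℝ,
      ∑ i, ∑ j, ∑ k, ∑ l, f i j k l = ∑ i, ∑ j, ∑ k, ∑ l, f j i k l :=
    fun f => Finset.sum_comm
  have swap_kl : ∀ f : N → N → N → N → ℝ,
      ∑ i, ∑ j, ∑ k, ∑ l, f i j k l = ∑ i, ∑ j, ∑ k, ∑ l, f i j l k :=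
    fun f => Finset.sum_congr rfl fun _ _ => Finset.sum_congr rfl fun _ _ => Finset.sum_comm
  have h2 : ∑ i, ∑ j, ∑ k, ∑ l, kd i k * B j l * X i j k l = inner2 B (ric X) := by
    rw [swap_ij, swap_kl, ← sum_mul_kd_mul]
    exact sum4_congr fun i j k l => by rw [hX.1, hX.2]; ring
  have h3 : ∑ i, ∑ j, ∑ k, ∑ l, B i l * kd j k * X i j k l = - inner2 B (ric X) := by
    rw [swap_kl, ← sum_mul_kd_mul]
    simp only [← Finset.sum_neg_distrib]
    exact sum4_congr fun i j k l => by rw [hX.2]; ring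
  have h4 : ∑ i, ∑ j, ∑ k, ∑ l, B j k * kd i l * X i j k l = - inner2 B (ric X) := by
    rw [swap_ij, ← sum_mul_kd_mul]
    simp only [← Finset.sum_neg_distrib]
    exact sum4_congr fun i j k l => by rw [hX.1]; ring
  have expand : ∀ i j k l, wedge B kd i j k l * X i j k l = (B i k * kd j l * X i j k l
      + kd i k * B j l * X i j k l - B i l * kd j k * X i j k l
      - B j k * kd i l * X i j k l) / 2 := by
    intro i j k l; simp only [wedge]; ring
  simp only [inner4, expand, ← Finset.sum_div, Finset.sum_add_distrib, Finset.sum_sub_distrib,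
    sum_mul_kd_mul, h2, h3, h4]
  ring

lemma inner2_kd_left (C : N → N → ℝ) : inner2 kd C = ∑ i, C i i := by
  simp [inner2, kd]

lemma ric_wedge_kd (C : N → N → ℝ) (i j : N) :
    ric (wedge C kd) i j
      = (((Fintype.card N : ℝ) - 2) * C i j + (∑ k, C k k) * kd i j) / 2 := by
  simp only [ric, wedge, kd, if_true, mul_one, one_mul, mul_ite, mul_zero, ite_mul, zero_mul,
    Finset.sum_add_distrib, Finset.sum_sub_distrib, Finset.sum_ite_eq,
    Finset.sum_ite_eq', Finset.sum_ite_irrel, Finset.sum_const_zero, Finset.mem_univ,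
    Finset.sum_const, Finset.card_univ, nsmul_eq_mul,
    ← Finset.mul_sum]
  ring

variable {n : ℕ}

lemma IsCurvOp.ric0_comm {R : N → N → N → N → ℝ} (hR : IsCurvOp R) (i j : N) :
    ric0 n R j i = ric0 n R i j := by
  have hric : ric R j i = ric R i j := Finset.sum_congr rfl fun k _ => hR.2.2.1 i k j k
  simp only [ric0, hric, kd, eq_comm]

lemma trace_ric0 (hN : Fintype.card N = n) (hn : n ≠ 0) (X : N → N → N → N → ℝ) :
    ∑ i, ric0 n X i i = 0 := by
  simp only [ric0, kd, mul_one, Finset.sum_sub_distrib, if_true, Finset.sum_const,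
    Finset.card_univ, hN, nsmul_eq_mul, lam]
  field_simp
  exact sub_self _

lemma ric_weyl (hN : Fintype.card N = n) (hn : 2 < n) (X : N → N → N → N → ℝ) :
    ric (weyl n X) = 0 := by
  have hn' : (2 : ℝ) < n := by exact_mod_cast hn
  have : (n : ℝ) - 1 ≠ 0 := by linarith
  have : (n : ℝ) - 2 ≠ 0 := by linarith
  ext i j
  rw [weyl_eq, ric_sub, ric_sub, ric_smul, ric_smul]
  simp only [Pi.sub_apply, Pi.smul_apply, smul_eq_mul, ric_wedge_kd,
    trace_ric0 hN (by omega), hN, Pi.zero_apply]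
  simp only [ric0, kd, if_true, Finset.sum_const, Finset.card_univ, hN]
  field_simp
  ring

lemma IsPairSkew.inner4_weyl_left {Y : N → N → N → N → ℝ} (hY : IsPairSkew Y)
    (hric : ric Y = 0) (X : N → N → N → N → ℝ) : inner4 (PaperStmt.weyl n X) Y = inner4 X Y := by
  simp [weyl_eq, inner4_sub_left, inner4_smul_left, hY.inner4_wedge_kd, hric, inner2]

lemma norm2sq_ric0 (hN : Fintype.card N = n) (hn : n ≠ 0) (X : N → N → N → N → ℝ) :
    norm2sq (ric0 n X) = norm2sq (ric X) - scal X ^ 2 / n := by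
  have row : ∀ i, ∑ j, ric0 n X i j * ric0 n X i j
      = ∑ j, ric X i j * ric X i j - 2 * lam n X * ric X i i + lam n X ^ 2 := by
    intro i
    simp only [ric0, kd, mul_ite, mul_one, mul_zero, sub_mul, mul_sub, ite_mul, zero_mul,
      Finset.sum_sub_distrib, Finset.sum_ite_eq, Finset.mem_univ, if_true]
    ring
  simp only [norm2sq, inner2, row, Finset.sum_add_distrib, Finset.sum_sub_distrib,
    ← Finset.mul_sum, Finset.sum_const, Finset.card_univ, hN, nsmul_eq_mul]
  rw [← scal.eq_1, lam]
  field_simp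
  ring

lemma inner2_ric0_ric (hn : n ≠ 0) (X : N → N → N → N → ℝ) :
    inner2 (ric0 n X) (ric X) = norm2sq (ric X) - scal X ^ 2 / n := by
  have row : ∀ i, ∑ j, ric0 n X i j * ric X i j
      = ∑ j, ric X i j * ric X i j - lam n X * ric X i i := by
    intro i
    simp only [ric0, kd, sub_mul, mul_ite, mul_one, mul_zero, ite_mul, zero_mul,
      Finset.sum_sub_distrib, Finset.sum_ite_eq, Finset.mem_univ, if_true]
  simp only [inner2, norm2sq, row, Finset.sum_sub_distrib, ← Finset.mul_sum]
  rw [← scal.eq_1, lam]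
  field_simp

lemma norm4sq_weyl (hN : Fintype.card N = n) (hn : 2 < n) {X : N → N → N → N → ℝ}
    (hX : IsPairSkew X) :
    norm4sq (weyl n X) = norm4sq X - scal X ^ 2 / (2 * n * (n - 1))
      - norm2sq (ric0 n X) / (n - 2) := by
  have hn' : (2 : ℝ) < n := by exact_mod_cast hn
  rw [norm4sq, (hX.weyl n).inner4_weyl_left (ric_weyl hN hn X), inner4_comm, weyl_eq,
    inner4_sub_left, inner4_sub_left, inner4_smul_left, inner4_smul_left,
    hX.inner4_wedge_kd, hX.inner4_wedge_kd, inner2_kd_left, ← scal.eq_1, inner2_ric0_ric (by omega),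
    norm2sq_ric0 hN (by omega), ← norm4sq, lam]
  have : (n : ℝ) - 1 ≠ 0 := by linarith
  have : (n : ℝ) - 2 ≠ 0 := by linarith
  field_simp

lemma norm4sq_weyl_wedge_self_le (hN : Fintype.card N = n) (hn : 2 < n) {A : N → N → ℝ}
    (hA : ∀ i j, A j i = A i j) (htr : ∑ i, A i i = 0) :
    norm4sq (weyl n (wedge A A)) ≤ ((n : ℝ) - 2) / (2 * ((n : ℝ) - 1)) * norm2sq A ^ 2 := by
  have hn' : (2 : ℝ) < n := by exact_mod_cast hn
  have hric : ric (wedge A A) = -matsq A := by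
    ext i j; simp [ric_wedge_self, htr]
  have hscal : scal (wedge A A) = -norm2sq A := by
    simp only [scal, hric, Pi.neg_apply, Finset.sum_neg_distrib, matsq, norm2sq, inner2, hA]
  have hric0 := norm2sq_ric0 hN (by omega) (wedge A A)
  rw [hric, norm2sq_neg, hscal, neg_sq] at hric0
  have hric0_nonneg := norm2sq_nonneg (ric0 n (wedge A A))
  rw [norm4sq_weyl hN hn (isPairSkew_wedge A A), norm4sq_wedge_self hA, hscal, neg_sq,
    show norm2sq (matsq A) = norm2sq (ric0 n (wedge A A)) + norm2sq A ^ 2 / n by linarith]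
  have key : ∀ a e : ℝ, (a ^ 2 - (e + a ^ 2 / n)) / 2 - a ^ 2 / (2 * n * (n - 1)) - e / (n - 2)
      = (n - 2) / (2 * (n - 1)) * a ^ 2 - n / (2 * (n - 2)) * e := by
    intro a e
    have : (n : ℝ) - 1 ≠ 0 := by linarith
    have : (n : ℝ) - 2 ≠ 0 := by linarith
    field_simp
    ring
  rw [key]
  have : 0 ≤ (n : ℝ) / (2 * (n - 2)) * norm2sq (ric0 n (wedge A A)) :=
    mul_nonneg (div_nonneg (by linarith) (by linarith)) hric0_nonneg
  linarith

end

/-- `|⟨Ric₀ ∧ Ric₀, W⟩| ≤ √((n-2)/(2(n-1))) ‖W‖ |Ric₀|²`. -/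
theorem stmt8 {n : ℕ} (hn : 4 ≤ n) (R : Fin n → Fin n → Fin n → Fin n → ℝ)
    (hR : IsCurvOp R) :
    |inner4 (wedge (ric0 n R) (ric0 n R)) (weyl n R)| ≤
      Real.sqrt (((n : ℝ) - 2) / (2 * ((n : ℝ) - 1))) *
        Real.sqrt (norm4sq (weyl n R)) * norm2sq (ric0 n R) := by
  have hN : Fintype.card (Fin n) = n := Fintype.card_fin n
  have hn2 : 2 < n := by omega
  set A := ric0 n R
  have hW := hR.isPairSkew.weyl n
  calc |inner4 (wedge A A) (weyl n R)|
      = |inner4 (weyl n (wedge A A)) (weyl n R)| := by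
        rw [hW.inner4_weyl_left (ric_weyl hN hn2 R)]
    _ ≤ √(norm4sq (weyl n (wedge A A))) * √(norm4sq (weyl n R)) := abs_inner4_le _ _
    _ ≤ √(((n : ℝ) - 2) / (2 * ((n : ℝ) - 1)) * norm2sq A ^ 2) * √(norm4sq (weyl n R)) := by
        gcongr
        exact norm4sq_weyl_wedge_self_le hN hn2 hR.ric0_comm (trace_ric0 hN (by omega) R)
    _ = _ := by
        rw [Real.sqrt_mul' _ (sq_nonneg _), Real.sqrt_sq (norm2sq_nonneg A)]
        ring

end PaperStmt
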